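/- arXiv:0904.2776 — 2 statements merged into one kernel-verified Lean document; each statement's English description precedes it below -/
import Mathlib

section
/- Let k ≥ 3 and consider a planar chord diagram: vertices v_0, v_1, ..., v_{k−1} in cyclic order on the boundary of a topological disk, with root edge {v_0, v_1}, together with a set of chords (unordered pairs {v_i, v_j} of non-consecutive boundary vertices) that are pairwise non-crossing, i.e., there exist no two chords {v_a, v_b} and {v_c, v_d} whose indices interleave as a < c < b < d in the cyclic order. Then there exists a vertex v ∉ {v_0, v_1} that is incident to no chord. -/
/- STATEMENT 1: In a planar chord diagram with k ≥ 3 boundary vertices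
v_0, ..., v_{k-1} in cyclic order, root edge {v_0, v_1}, and pairwise
non-crossing chords joining non-consecutive boundary vertices, there is a
vertex v ∉ {v_0, v_1} incident to no chord. -/

private lemma pair_eq_aux {k : ℕ} {i j x y : Fin k} (hij : i < j) (hxy : x < y)
    (h : ({i, j} : Finset (Fin k)) = {x, y}) : i = x ∧ j = y := by
  have hi : i = x ∨ i = y := by
    have : i ∈ ({x, y} : Finset (Fin k)) := by rw [← h]; simp
    simpa using this
  have hj : j = x ∨ j = y := by
    have : j ∈ ({x, y} : Finset (Fin k)) := by rw [← h]; simp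
    simpa using this
  have hx : x = i ∨ x = j := by
    have : x ∈ ({i, j} : Finset (Fin k)) := by rw [h]; simp
    simpa using this
  rcases hi with hi | hi <;> rcases hj with hj | hj
  · exact absurd (hi ▸ hj ▸ hij) (lt_irrefl _)
  · exact ⟨hi, hj⟩
  · exact absurd (hi ▸ hj ▸ hij) (not_lt.mpr hxy.le)
  · rcases hx with hx | hx
    · exact absurd (hx ▸ hi ▸ hxy) (lt_irrefl _)
    · exact absurd (hx ▸ hj ▸ hxy) (lt_irrefl _)

private lemma chord_norm_num {k a b : ℕ} (hbk : b < k) (hab : a < b)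
    (h1 : (a + 1) % k ≠ b) (h2 : (b + 1) % k ≠ a) :
    a + 2 ≤ b ∧ (b = k - 1 → 1 ≤ a) := by
  have m1 : (a + 1) % k = a + 1 := Nat.mod_eq_of_lt (by omega)
  constructor
  · omega
  · intro hb
    have m2 : (b + 1) % k = 0 := by
      rw [show b + 1 = k by omega, Nat.mod_self]
    omega

theorem planar_chord_diagram_free_vertex (k : ℕ) (hk : 3 ≤ k)
    (chords : Set (Finset (Fin k)))
    (hchord : ∀ c ∈ chords, ∃ i j : Fin k, i ≠ j ∧ c = {i, j} ∧
        -- the endpoints are non-consecutive in cyclic order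
        ((i : ℕ) + 1) % k ≠ (j : ℕ) ∧ ((j : ℕ) + 1) % k ≠ (i : ℕ))
    (hnoncross : ¬ ∃ a c b d : Fin k, a < c ∧ c < b ∧ b < d ∧
        ({a, b} : Finset (Fin k)) ∈ chords ∧ ({c, d} : Finset (Fin k)) ∈ chords) :
    ∃ v : Fin k, v ≠ (⟨0, by omega⟩ : Fin k) ∧ v ≠ (⟨1, by omega⟩ : Fin k) ∧
      ∀ c ∈ chords, v ∉ c := by
  classical
  -- normalization: every chord is {a, b} with a + 2 ≤ b and (b = k-1 → 1 ≤ a)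
  have hnorm : ∀ c ∈ chords, ∃ (a b : ℕ) (ha : a < k) (hb : b < k),
      a < b ∧ c = {(⟨a, ha⟩ : Fin k), ⟨b, hb⟩} ∧ a + 2 ≤ b ∧ (b = k - 1 → 1 ≤ a) := by
    intro c hc
    obtain ⟨i, j, hij, hce, h1, h2⟩ := hchord c hc
    rcases lt_or_gt_of_ne hij with h | h
    · have h' : (i : ℕ) < (j : ℕ) := h
      obtain ⟨hA, hB⟩ := chord_norm_num j.isLt h' h1 h2
      exact ⟨i, j, i.isLt, j.isLt, h', by simpa using hce, hA, hB⟩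
    · have h' : (j : ℕ) < (i : ℕ) := h
      obtain ⟨hA, hB⟩ := chord_norm_num i.isLt h' h2 h1
      refine ⟨j, i, j.isLt, i.isLt, h', ?_, hA, hB⟩
      rw [hce, Finset.pair_comm]
  -- the normalized chord relation on ℕ
  let Q : ℕ → ℕ → Prop := fun a b => ∃ (ha : a < k) (hb : b < k),
      ({(⟨a, ha⟩ : Fin k), ⟨b, hb⟩} : Finset (Fin k)) ∈ chords
  -- facts about Q
  have hQfact : ∀ a b, a < b → Q a b → a + 2 ≤ b ∧ (b = k - 1 → 1 ≤ a) := by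
    intro a b hab ⟨ha, hb, hmem⟩
    obtain ⟨x, y, hx, hy, hxy, hce, hA, hB⟩ := hnorm _ hmem
    obtain ⟨e1, e2⟩ := pair_eq_aux (show (⟨a, ha⟩ : Fin k) < ⟨b, hb⟩ from hab)
      (show (⟨x, hx⟩ : Fin k) < ⟨y, hy⟩ from hxy) hce
    have e1' : a = x := congrArg Fin.val e1
    have e2' : b = y := congrArg Fin.val e2
    subst e1'; subst e2'
    exact ⟨hA, hB⟩
  -- crossing gives a contradiction
  have hX : ∀ a c b d : ℕ, a < c → c < b → b < d → Q a b → Q c d → False := by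
    intro a c b d h1 h2 h3 ⟨ha, hb, hab⟩ ⟨hc, hd, hcd⟩
    exact hnoncross ⟨⟨a, ha⟩, ⟨c, hc⟩, ⟨b, hb⟩, ⟨d, hd⟩, h1, h2, h3, hab, hcd⟩
  by_cases hex : ∃ c, c ∈ chords
  · by_cases hex1 : ∃ a b, 1 ≤ a ∧ a < b ∧ Q a b
    · -- case 1: some chord avoids vertex 0; take one with minimal span
      have hn : ∃ n, ∃ a b, 1 ≤ a ∧ a < b ∧ Q a b ∧ b - a = n := by
        obtain ⟨a, b, h1, h2, h3⟩ := hex1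
        exact ⟨b - a, a, b, h1, h2, h3, rfl⟩
      obtain ⟨a, b, ha1, hab, hQab, hspan⟩ := Nat.find_spec hn
      have hmin : ∀ a' b', 1 ≤ a' → a' < b' → Q a' b' → b - a ≤ b' - a' := by
        intro a' b' h1 h2 h3
        by_contra hlt
        exact Nat.find_min hn (by omega) ⟨a', b', h1, h2, h3, rfl⟩
      obtain ⟨hb2, -⟩ := hQfact a b hab hQab
      obtain ⟨-, hbk, -⟩ := id hQab
      have hv : a + 1 < k := by omega
      refine ⟨⟨a + 1, hv⟩, ?_, ?_, ?_⟩
      · simp only [ne_eq, Fin.mk.injEq]; omega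
      · simp only [ne_eq, Fin.mk.injEq]; omega
      · intro c hc hvc
        obtain ⟨x, y, hx, hy, hxy, hce, hA, hB⟩ := hnorm c hc
        have hQxy : Q x y := ⟨hx, hy, hce ▸ hc⟩
        rw [hce] at hvc
        have : a + 1 = x ∨ a + 1 = y := by
          simpa [Fin.ext_iff] using hvc
        rcases this with h | h
        · -- chord is {a+1, y} with y ≥ a+3; minimality forces y > b, giving a crossing
          subst h
          have := hmin (a + 1) y (by omega) hxy hQxy
          have hby : b < y := by omega
          exact hX a (a + 1) b y (by omega) (by omega) hby hQab hQxy
        · -- chord is {x, a+1} with x < a, giving a crossing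
          subst h
          have hxa : x < a := by omega
          exact hX x a (a + 1) b hxa (by omega) (by omega) hQxy hQab
    · -- case 2: every chord contains vertex 0; take the largest b with Q 0 b
      have hall : ∀ c ∈ chords, ∃ (b : ℕ), 2 ≤ b ∧ b < k ∧ Q 0 b ∧
          ∃ (hb : b < k), c = {(⟨0, by omega⟩ : Fin k), ⟨b, hb⟩} := by
        intro c hc
        obtain ⟨x, y, hx, hy, hxy, hce, hA, hB⟩ := hnorm c hc
        have hQxy : Q x y := ⟨hx, hy, hce ▸ hc⟩
        have hx0 : x = 0 := by
          by_contra hx0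
          exact hex1 ⟨x, y, by omega, hxy, hQxy⟩
        subst hx0
        exact ⟨y, by omega, hy, hQxy, hy, hce⟩
      obtain ⟨c, hc⟩ := hex
      obtain ⟨y, hy2, hyk, hQ0y, -⟩ := hall c hc
      set B := Nat.findGreatest (fun b => Q 0 b) (k - 1) with hBdef
      have hQB : Q 0 B := Nat.findGreatest_spec (by omega) hQ0y
      have hBy : y ≤ B := Nat.le_findGreatest (by omega) hQ0y
      have hBk : B ≤ k - 2 := by
        obtain ⟨h2, hlast⟩ := hQfact 0 B (by omega) hQB
        obtain ⟨-, hBlt, -⟩ := hQB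
        omega
      have hv : B + 1 < k := by omega
      refine ⟨⟨B + 1, hv⟩, ?_, ?_, ?_⟩
      · simp only [ne_eq, Fin.mk.injEq]; omega
      · simp only [ne_eq, Fin.mk.injEq]; omega
      · intro c' hc' hvc
        obtain ⟨y', hy'2, hy'k, hQ0y', hb', hce'⟩ := hall c' hc'
        rw [hce'] at hvc
        have : B + 1 = 0 ∨ B + 1 = y' := by
          simpa [Fin.ext_iff] using hvc
        rcases this with h | h
        · omega
        · exact Nat.findGreatest_is_greatest (n := k - 1) (P := fun b => Q 0 b)
            (by omega) (by omega) (h ▸ hQ0y')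
  · -- no chords at all: vertex 2 works
    refine ⟨⟨2, by omega⟩, ?_, ?_, ?_⟩
    · simp [Fin.ext_iff]
    · simp [Fin.ext_iff]
    · intro c hc
      exact absurd ⟨c, hc⟩ hex
end

section
/- Let C be a connected subcomplex of a genus g triangulation T whose complementary dual D is connected, and let e be a split edge of C. Then the split operation at e — doubling e into two parallel edges delimiting a face of degree 2, and adding this face and the two copies of e to C — leaves D connected, increases the number of boundary faces of C by 1, decreases the Euler characteristic χ(C) by 1, and leaves both the Euler characteristic and the genus of the map associated with C unchanged. -/
set_option linter.unusedSectionVars false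

/- ----------------------------------------------------------------
   A formalization of (topological) maps on closed orientable
   surfaces via combinatorial maps: a finite set of brins
   (half-edges/darts), a permutation `next` giving the clockwise
   order of the brins around their origin vertex, and a fixed-point
   free involution `opp` exchanging the two brins of each edge.
   Vertices are the orbits of `next`, edges the orbits of `opp`,
   faces the orbits of the facial-walk permutation
   `facePerm = opp ∘ next` (the follower of a brin, then its
   opposite).
   ---------------------------------------------------------------- -/

structure CombMap (D : Type) [Fintype D] [DecidableEq D] where
  next : Equiv.Perm D
  opp  : Equiv.Perm D
  opp_invol : ∀ d, opp (opp d) = d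
  opp_ne : ∀ d, opp d ≠ d

namespace CombMap

variable {D : Type} [Fintype D] [DecidableEq D]

/-- the facial-walk permutation: `b_{i+1}` is the opposite of the follower of `b_i` -/
def facePerm (M : CombMap D) : Equiv.Perm D := M.next.trans M.opp

/-- forward orbit of a dart under a function -/
def forb (f : D → D) (d : D) : Set D := {h | ∃ n : ℕ, f^[n] d = h}

/-- number of orbits of `f` met by the (f-invariant) set `s` -/
noncomputable def numOrbitsIn (f : D → D) (s : Set D) : ℕ :=
  ((fun d => forb f d) '' s).ncard

noncomputable def numVertices (M : CombMap D) : ℕ := numOrbitsIn (⇑M.next) Set.univ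
noncomputable def numEdges (M : CombMap D) : ℕ := numOrbitsIn (⇑M.opp) Set.univ
noncomputable def numFaces (M : CombMap D) : ℕ := numOrbitsIn (⇑M.facePerm) Set.univ

noncomputable def eulerChar (M : CombMap D) : ℤ :=
  (numVertices M : ℤ) - (numEdges M : ℤ) + (numFaces M : ℤ)

/-- the genus `g` of the surface on which `M` is embedded: Euler's relation `2 - 2g = |V|-|E|+|F|` -/
def HasGenus (M : CombMap D) (g : ℕ) : Prop := M.eulerChar = 2 - 2 * (g : ℤ)

def Connected (M : CombMap D) : Prop :=
  ∀ d d' : D, Relation.ReflTransGen (fun a b => b = M.next a ∨ b = M.opp a) d d'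

/-- the two darts have the same origin vertex -/
def sameVertex (M : CombMap D) (d d' : D) : Prop := d' ∈ forb (⇑M.next) d

def NoLoops (M : CombMap D) : Prop := ∀ d, ¬ M.sameVertex d (M.opp d)

def NoMultipleEdges (M : CombMap D) : Prop :=
  ∀ d d', M.sameVertex d d' → M.sameVertex (M.opp d) (M.opp d') → d' = d ∨ d' = M.opp d

/-- a triangulation of genus `g`: a connected simple map, all of whose faces have degree 3 -/
structure IsTriang (M : CombMap D) (g : ℕ) : Prop where
  conn : M.Connected
  noLoops : M.NoLoops
  noMult : M.NoMultipleEdges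
  deg3 : ∀ d, (⇑M.facePerm)^[3] d = d ∧ M.facePerm d ≠ d
  genus : M.HasGenus g

/- root face: marked by a dart `r`; the root face is the facial orbit of `r`,
   and the root vertices are `v_i = origin of facePerm^[i] r`, `i = 0,1,2`. -/

def rootDarts (M : CombMap D) (r : D) : Set D := forb (⇑M.facePerm) r

/-- the dart belongs to an edge of the root face (an "outer" edge) -/
def RootEdgeDart (M : CombMap D) (r : D) (h : D) : Prop :=
  h ∈ rootDarts M r ∨ M.opp h ∈ rootDarts M r

/-- the dart belongs to an inner edge -/
def InnerDart (M : CombMap D) (r : D) (h : D) : Prop := ¬ RootEdgeDart M r h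

/-- a dart whose origin is the root vertex `v_i` -/
def vDart (M : CombMap D) (r : D) (i : ℕ) : D := (⇑M.facePerm)^[i] r

/-- `v` (as a dart) is an inner vertex, i.e. not a vertex of the root face -/
def InnerVertex (M : CombMap D) (r : D) (v : D) : Prop :=
  ∀ h ∈ rootDarts M r, ¬ M.sameVertex h v

/- ------------------- subcomplexes ------------------- -/

/-- A subcomplex `C = (V',E',F')` of `M`, encoded by the sets of darts of its
vertices, edges and faces: `Vs` is `next`-closed (a union of vertex orbits),
`Es` is `opp`-closed, `Fs` is `facePerm`-closed, the edges of any chosen face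
belong to `C`, and the endpoints of any chosen edge belong to `C`. -/
structure Subcomplex (M : CombMap D) where
  Vs : Set D
  Es : Set D
  Fs : Set D
  vs_closed : ∀ d ∈ Vs, M.next d ∈ Vs
  es_closed : ∀ d ∈ Es, M.opp d ∈ Es
  fs_closed : ∀ d ∈ Fs, M.facePerm d ∈ Fs
  face_edges : ∀ d ∈ Fs, d ∈ Es
  edge_verts : ∀ d ∈ Es, d ∈ Vs

noncomputable def Subcomplex.eulerChar {M : CombMap D} (C : Subcomplex M) : ℤ :=
  (numOrbitsIn (⇑M.next) C.Vs : ℤ) - (numOrbitsIn (⇑M.opp) C.Es : ℤ)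
    + (numOrbitsIn (⇑M.facePerm) C.Fs : ℤ)

/-- first-return time (≥ 1) of the iteration of `f` into `s` -/
noncomputable def returnSteps (f : Equiv.Perm D) (s : Set D) (d : D) : ℕ :=
  sInf {k | 0 < k ∧ (⇑f)^[k] d ∈ s}

/-- first-return map of `f` into `s`: the follower of `d` within `s` -/
noncomputable def firstReturn (f : Equiv.Perm D) (s : Set D) (d : D) : D :=
  (⇑f)^[returnSteps f s d] d

/-- in the map induced on a set `E2` of darts (rotations given by first return of `next`),
the facial-walk successor: follower within `E2`, then opposite -/
noncomputable def gwalk (M : CombMap D) (E2 : Set D) (d : D) : D :=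
  M.opp (firstReturn M.next E2 d)

/-- number of facial walks of the subgraph spanned by the darts `E2` -/
noncomputable def graphFaces (M : CombMap D) (E2 : Set D) : ℕ :=
  numOrbitsIn (gwalk M E2) E2

def graphFaceOrbits (M : CombMap D) (E2 : Set D) : Set (Set D) :=
  {s | ∃ d ∈ E2, s = forb (gwalk M E2) d}

/-- the facial-walk successor on the boundary of a subcomplex -/
noncomputable def Subcomplex.bwalk {M : CombMap D} (C : Subcomplex M) : D → D :=
  gwalk M C.Es

/-- a boundary brin: a brin of `C` lying on a facial walk of `C` which does not
bound a face of `C` (for `Fs` a union of full face orbits these are the brins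
of `Es \ Fs`); it is identified with the boundary corner it starts -/
def Subcomplex.BoundaryBrin {M : CombMap D} (C : Subcomplex M) (d : D) : Prop :=
  d ∈ C.Es ∧ d ∉ C.Fs

/-- number of boundary faces of `C` (one disk attached to each boundary walk) -/
noncomputable def Subcomplex.numBoundaryFaces {M : CombMap D} (C : Subcomplex M) : ℕ :=
  numOrbitsIn C.bwalk (C.Es \ C.Fs)

/-- Euler characteristic of the map associated with `C` (disks attached) -/
noncomputable def Subcomplex.assocEulerChar {M : CombMap D} (C : Subcomplex M) : ℤ :=
  C.eulerChar + (C.numBoundaryFaces : ℤ)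

/-- the map associated with `C` has genus `g'` -/
def Subcomplex.assocHasGenus {M : CombMap D} (C : Subcomplex M) (g' : ℤ) : Prop :=
  C.assocEulerChar = 2 - 2 * g'

/-- the exterior brins incident to the boundary corner at the boundary brin `d`:
the brins of `M \ C` strictly between `d` and its follower within `C`,
in cw order around the origin of `d` -/
def Subcomplex.cornerExterior {M : CombMap D} (C : Subcomplex M) (d : D) : Set D :=
  {g | ∃ j, 0 < j ∧ j < returnSteps M.next C.Es d ∧ g = (⇑M.next)^[j] d}

/-- a chordal edge: an edge of `M \ C` whose two brins are exterior brins
of boundary corners of `C` -/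
def Subcomplex.Chordal {M : CombMap D} (C : Subcomplex M) (h : D) : Prop :=
  h ∉ C.Es ∧ M.opp h ∉ C.Es ∧
  (∃ d, C.BoundaryBrin d ∧ h ∈ C.cornerExterior d) ∧
  (∃ d, C.BoundaryBrin d ∧ M.opp h ∈ C.cornerExterior d)

/-- a free boundary corner: no exterior edge of the corner is chordal -/
def Subcomplex.FreeCorner {M : CombMap D} (C : Subcomplex M) (d : D) : Prop :=
  C.BoundaryBrin d ∧ ∀ g ∈ C.cornerExterior d, ¬ C.Chordal g

/-- connectivity (through vertices and edges of `C`, avoiding the edges of `A`) -/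
def Subcomplex.reachAvoiding {M : CombMap D} (C : Subcomplex M) (A : Set D) (a b : D) : Prop :=
  Relation.ReflTransGen (fun x y =>
    (x ∈ C.Vs ∧ y ∈ C.Vs ∧ M.sameVertex x y) ∨
    (x ∈ C.Es ∧ x ∉ A ∧ M.opp x ∉ A ∧ y = M.opp x)) a b

def Subcomplex.Conn {M : CombMap D} (C : Subcomplex M) : Prop :=
  ∀ a ∈ C.Vs, ∀ b ∈ C.Vs, C.reachAvoiding ∅ a b

/-- a bridge: an edge whose removal disconnects the subcomplex -/
def Subcomplex.Bridge {M : CombMap D} (C : Subcomplex M) (h : D) : Prop :=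
  h ∈ C.Es ∧ ¬ (∀ a ∈ C.Vs, ∀ b ∈ C.Vs, C.reachAvoiding {h, M.opp h} a b)

/-- two boundary corners lie on the same boundary walk (boundary face) of `C` -/
def Subcomplex.SameBoundaryFace {M : CombMap D} (C : Subcomplex M) (a b : D) : Prop :=
  b ∈ forb C.bwalk a ∨ a ∈ forb C.bwalk b

/- ------------------- duality ------------------- -/

/-- the dual map: same darts, vertices of the dual are the faces of `M`
(rotation given by the facial walks), and `opp` unchanged. Under this
encoding the dual brin `h*` of a brin `h` is `h` itself. -/
def dual (M : CombMap D) : CombMap D where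
  next := M.facePerm
  opp := M.opp
  opp_invol := M.opp_invol
  opp_ne := M.opp_ne

lemma perm_inv_mem (f : Equiv.Perm D) (s : Set D)
    (hs : ∀ d ∈ s, f d ∈ s) : ∀ d ∈ s, f.symm d ∈ s := by
  have hiter : ∀ n : ℕ, ∀ d ∈ s, (⇑f)^[n] d ∈ s := by
    intro n
    induction n with
    | zero => intro d hd; simpa using hd
    | succ n ih => intro d hd; rw [Function.iterate_succ_apply]; exact ih _ (hs d hd)
  intro d hd
  have hpos : 0 < orderOf f := orderOf_pos f
  have hfix : (⇑f)^[orderOf f] d = d := by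
    rw [← Equiv.Perm.coe_pow, pow_orderOf_eq_one]; rfl
  have h2 : (⇑f)^[orderOf f] d = f ((⇑f)^[orderOf f - 1] d) := by
    conv_lhs => rw [← Nat.sub_add_cancel hpos]
    rw [Function.iterate_succ_apply']
  have hkey : f.symm d = (⇑f)^[orderOf f - 1] d := by
    apply f.injective
    rw [Equiv.apply_symm_apply, ← h2, hfix]
  rw [hkey]
  exact hiter _ d hd

lemma dual_facePerm (M : CombMap D) (d : D) : (dual M).facePerm d = M.next d := by
  simp [dual, facePerm, Equiv.trans_apply, M.opp_invol]

/-- the complementary dual of a subcomplex `C` of `M`: the subcomplex of the dual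
map formed by the vertices dual to unchosen faces, edges dual to unchosen edges,
and faces dual to unchosen vertices -/
def Subcomplex.compDual {M : CombMap D} (C : Subcomplex M) : Subcomplex (dual M) where
  Vs := C.Fsᶜ
  Es := C.Esᶜ
  Fs := C.Vsᶜ
  vs_closed := by
    intro d hd hmem
    have hmem' : M.facePerm d ∈ C.Fs := hmem
    exact hd (by
      have := perm_inv_mem M.facePerm C.Fs C.fs_closed _ hmem'
      simpa using this)
  es_closed := by
    intro d hd hmem
    have hmem' : M.opp d ∈ C.Es := hmem
    exact hd (by
      have := perm_inv_mem M.opp C.Es C.es_closed _ hmem'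
      simpa using this)
  fs_closed := by
    intro d hd hmem
    rw [dual_facePerm] at hmem
    exact hd (by
      have := perm_inv_mem M.next C.Vs C.vs_closed _ hmem
      simpa using this)
  face_edges := by
    intro d hd hmem
    exact hd (C.edge_verts _ hmem)
  edge_verts := by
    intro d hd hmem
    exact hd (C.face_edges _ hmem)

/- ------------------- complete boundary walks ------------------- -/

open Classical in
/-- the successor along the complete list of brins of a boundary walk
(boundary brins interleaved with the exterior brins of each boundary corner) -/
noncomputable def cwalk (M : CombMap D) (E2 : Set D) (h : D) : D :=
  if M.next h ∈ E2 then M.opp (M.next h) else M.next h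

noncomputable def Subcomplex.completeWalk {M : CombMap D} (C : Subcomplex M) : D → D :=
  cwalk M C.Es

/-- brins appearing on some complete boundary walk of `C` -/
def Subcomplex.walkSupport {M : CombMap D} (C : Subcomplex M) : Set D :=
  {h | ∃ d, C.BoundaryBrin d ∧ h ∈ forb C.completeWalk d}

/-- the complete boundary walks of `C`, as sets of brins -/
def Subcomplex.boundaryOrbits {M : CombMap D} (C : Subcomplex M) : Set (Set D) :=
  {s | ∃ d, C.BoundaryBrin d ∧ s = forb C.completeWalk d}

noncomputable def Subcomplex.walkPeriod {M : CombMap D} (C : Subcomplex M) (d : D) : ℕ :=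
  sInf {n | 0 < n ∧ (C.completeWalk)^[n] d = d}

open Classical in
/-- the dual brin map of Lemma `boundary`: `φ(h) = h*` if `h ∈ C`,
`φ(h) = opposite(h*)` otherwise (recall `h* = h` in our encoding of the dual) -/
noncomputable def dphi (M : CombMap D) (C : Subcomplex M) (h : D) : D :=
  if h ∈ C.Es then h else M.opp h

/-- same edge (as darts) -/
def SameEdgeDart (M : CombMap D) (a b : D) : Prop := b = a ∨ b = M.opp a

/- ------------------- the traversal operations ------------------- -/

/-- the darts of the faces of `M \ C` incident to the boundary corner at `d`,
together with all darts on these faces -/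
def Subcomplex.cornerFaceDarts {M : CombMap D} (C : Subcomplex M) (d : D) : Set D :=
  {g | ∃ j, j < returnSteps M.next C.Es d ∧ g ∈ forb (⇑M.facePerm) ((⇑M.next)^[j] d)}

/-- the operation `conquer(b)` at a free boundary corner `b = d`: add to `C` all
exterior faces incident to `b`, together with their edges and vertices -/
def IsConquer {M : CombMap D} (C : Subcomplex M) (d : D) (C' : Subcomplex M) : Prop :=
  C.FreeCorner d ∧
  C'.Fs = C.Fs ∪ C.cornerFaceDarts d ∧
  C'.Es = C.Es ∪ C.cornerFaceDarts d ∪ (⇑M.opp) '' C.cornerFaceDarts d ∧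
  C'.Vs = C.Vs ∪ {g | ∃ h ∈ C'.Es, g ∈ forb (⇑M.next) h}

/-- adding a (split or merge) chordal edge `h` to `C` -/
def IsAddEdge {M : CombMap D} (C : Subcomplex M) (h : D) (C' : Subcomplex M) : Prop :=
  C'.Fs = C.Fs ∧ C'.Es = C.Es ∪ {h, M.opp h} ∧ C'.Vs = C.Vs

/-- a split edge: a non-separating chordal edge (its dual is not a bridge of the
complementary dual) whose two brins are incident to boundary corners lying in
the same boundary face of `C` -/
def Subcomplex.SplitEdge {M : CombMap D} (C : Subcomplex M) (h : D) : Prop :=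
  C.Chordal h ∧ ¬ C.compDual.Bridge h ∧
  ∀ d d', C.BoundaryBrin d → h ∈ C.cornerExterior d →
    C.BoundaryBrin d' → M.opp h ∈ C.cornerExterior d' → C.SameBoundaryFace d d'

/-- a merge edge: a chordal edge whose two brins are incident to boundary corners
lying in distinct boundary faces of `C` -/
def Subcomplex.MergeEdge {M : CombMap D} (C : Subcomplex M) (h : D) : Prop :=
  C.Chordal h ∧
  ∃ d d', C.BoundaryBrin d ∧ h ∈ C.cornerExterior d ∧
    C.BoundaryBrin d' ∧ M.opp h ∈ C.cornerExterior d' ∧ ¬ C.SameBoundaryFace d d'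

/-- the initial subcomplex: the root face together with its edges and vertices -/
def IsRootComplex (M : CombMap D) (r : D) (C : Subcomplex M) : Prop :=
  C.Fs = rootDarts M r ∧
  C.Es = rootDarts M r ∪ (⇑M.opp) '' rootDarts M r ∧
  C.Vs = {g | ∃ h ∈ C.Es, g ∈ forb (⇑M.next) h}

def IsFull {M : CombMap D} (C : Subcomplex M) : Prop :=
  C.Fs = Set.univ ∧ C.Es = Set.univ ∧ C.Vs = Set.univ

/-- one (uncolored) step of the traversal: a conquest, a split, or a merge -/
def PlainStep (M : CombMap D) (C C' : Subcomplex M) : Prop :=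
  (∃ d, IsConquer C d C') ∨ (∃ h, (C.SplitEdge h ∨ C.MergeEdge h) ∧ IsAddEdge C h C')

/-- a subcomplex reachable from the root face by traversal steps -/
def ExecReach (M : CombMap D) (r : D) (C : Subcomplex M) : Prop :=
  ∃ C0, IsRootComplex M r C0 ∧ Relation.ReflTransGen (PlainStep M) C0 C

/- ------------------- the colorient rule ------------------- -/

/-- the `colorient` rule at the free boundary corner `d` (with `d'` the follower
of `d` within `C`): the edge of `d` is oriented out of the corner vertex with
color 1, the edge of `d'` is oriented outward with color 0, and all exterior
edges of the corner are oriented toward the corner vertex with color 2 (on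
non-special inner edges the opposite dart records the same edge seen from the
other endpoint; each dart of a special edge records its own copy). -/
def ColorientEq (M : CombMap D) (r : D) (C : Subcomplex M) (d : D)
    (dir : D → Bool) (col : D → Fin 3) (special : Set D) : Prop :=
  (InnerDart M r d → dir d = true ∧ col d = 1 ∧
      (d ∉ special → dir (M.opp d) = false ∧ col (M.opp d) = 1)) ∧
  (InnerDart M r (firstReturn M.next C.Es d) →
      dir (firstReturn M.next C.Es d) = true ∧ col (firstReturn M.next C.Es d) = 0 ∧
      (firstReturn M.next C.Es d ∉ special →
        dir (M.opp (firstReturn M.next C.Es d)) = false ∧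
        col (M.opp (firstReturn M.next C.Es d)) = 0)) ∧
  (∀ j, 0 < j → j < returnSteps M.next C.Es d → InnerDart M r ((⇑M.next)^[j] d) →
      dir ((⇑M.next)^[j] d) = false ∧ col ((⇑M.next)^[j] d) = 2 ∧
      dir (M.opp ((⇑M.next)^[j] d)) = true ∧ col (M.opp ((⇑M.next)^[j] d)) = 2)

/-- one step of `ComputeSchnyderAnyGenus`, recording colors and orientations -/
def GStep (M : CombMap D) (r : D) (C C' : Subcomplex M)
    (dir : D → Bool) (col : D → Fin 3) (special : Set D) : Prop :=
  (∃ d, IsConquer C d C' ∧ ColorientEq M r C d dir col special) ∨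
  (∃ h ∈ special, (C.SplitEdge h ∨ C.MergeEdge h) ∧ IsAddEdge C h C')

/-- a complete execution of the traversal algorithm `ComputeSchnyderAnyGenus`
on `M` with root face at `r`, producing the orientation `dir`, the coloring
`col` and the set `special` of darts of the (split/merge) special edges -/
structure GExec (M : CombMap D) (r : D)
    (dir : D → Bool) (col : D → Fin 3) (special : Set D) where
  N : ℕ
  Cs : ℕ → Subcomplex M
  init : IsRootComplex M r (Cs 0)
  final : IsFull (Cs N)
  step : ∀ k < N, GStep M r (Cs k) (Cs (k + 1)) dir col special
  special_opp : ∀ h ∈ special, M.opp h ∈ special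
  special_added : ∀ h ∈ special, ∃ k < N, ∃ h',
      ((Cs k).SplitEdge h' ∨ (Cs k).MergeEdge h') ∧ IsAddEdge (Cs k) h' (Cs (k + 1)) ∧
      (h = h' ∨ h = M.opp h')

/-- an execution of the planar traversal algorithm (conquests only) -/
structure PlanarExec (M : CombMap D) (r : D) (dir : D → Bool) (col : D → Fin 3) where
  N : ℕ
  Cs : ℕ → Subcomplex M
  init : IsRootComplex M r (Cs 0)
  final : IsFull (Cs N)
  step : ∀ k < N, ∃ d, IsConquer (Cs k) d (Cs (k + 1)) ∧
      ColorientEq M r (Cs k) d dir col ∅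

/-- a boundary brin of the edge `{v₀,v₁}` (marking the boundary face `f₀`) -/
def RootBoundaryBrin (M : CombMap D) (r : D) (C : Subcomplex M) (d0 : D) : Prop :=
  C.BoundaryBrin d0 ∧ M.sameVertex (vDart M r 0) d0 ∧ M.sameVertex (vDart M r 1) (M.opp d0)

/-- the implementation of the traversal that always chooses an update-candidate
incident to the boundary face containing `{v₀,v₁}` and gives priority to free
boundary corners over split and merge edges -/
def PriorityRun {M : CombMap D} (r : D) {dir : D → Bool} {col : D → Fin 3}
    {special : Set D} (E : GExec M r dir col special) : Prop :=
  ∀ k < E.N,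
    (∀ d, IsConquer (E.Cs k) d (E.Cs (k + 1)) →
        ∃ d0, RootBoundaryBrin M r (E.Cs k) d0 ∧ (E.Cs k).SameBoundaryFace d0 d) ∧
    (∀ h, ((E.Cs k).SplitEdge h ∨ (E.Cs k).MergeEdge h) →
        IsAddEdge (E.Cs k) h (E.Cs (k + 1)) →
        (¬ ∃ d d0, RootBoundaryBrin M r (E.Cs k) d0 ∧ (E.Cs k).FreeCorner d ∧
            (E.Cs k).SameBoundaryFace d0 d) ∧
        (∃ d d0, RootBoundaryBrin M r (E.Cs k) d0 ∧ (E.Cs k).BoundaryBrin d ∧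
            (E.Cs k).SameBoundaryFace d0 d ∧
            (h ∈ (E.Cs k).cornerExterior d ∨ M.opp h ∈ (E.Cs k).cornerExterior d)))

/- ------------------- Schnyder woods ------------------- -/

/-- the word pattern `Seq(In 1), Out 0, Seq(In 2), Out 1, Seq(In 0)` on values
`(outgoing?, color)` read in ccw order -/
def SchnyderPattern (l : List (Bool × Fin 3)) : Prop :=
  ∃ a b c : ℕ, l = List.replicate a ((false : Bool), (1 : Fin 3)) ++
    [((true : Bool), (0 : Fin 3))] ++ List.replicate b ((false : Bool), (2 : Fin 3)) ++
    [((true : Bool), (1 : Fin 3))] ++ List.replicate c ((false : Bool), (0 : Fin 3))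

noncomputable def vdeg (M : CombMap D) (v : D) : ℕ := (forb (⇑M.next) v).ncard

/-- the ccw successor around the origin vertex -/
noncomputable def ccwSucc (M : CombMap D) : D → D := ⇑M.next.symm

/-- the darts strictly after `s` in ccw order around its origin, one full turn -/
noncomputable def ccwTail (M : CombMap D) (s : D) : List D :=
  (List.range (vdeg M s - 1)).map fun i => (ccwSucc M)^[i + 1] s

open Classical in
/-- the darts of the sector starting right after the delimiter `s` (in ccw order),
up to the next delimiter -/
noncomputable def sectorDarts (M : CombMap D) (P : D → Prop) (s : D) : List D :=
  (ccwTail M s).takeWhile fun g => decide (¬ P g)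

noncomputable def nextDelim (M : CombMap D) (P : D → Prop) (s : D) : D :=
  (ccwSucc M)^[(sectorDarts M P s).length + 1] s

open Classical in
/-- the sequence of values `(outgoing?, color)` of the inner edges of the sector
that follows the delimiter `s` in ccw order around the origin of `s`.  A special
edge is doubled into two copies enclosing a special face: the copy recorded on the
dart `g` itself appears at the end of the sector preceding the special face of `g`,
and the copy recorded on `M.opp g` (seen from the origin of `g`, hence with
direction flipped) appears at the beginning of the sector following it.  When
`excl2 = true` (local condition at an inner vertex), a copy which is the outgoing
edge of color 2 is excluded from its sector. -/
noncomputable def sectorVals (M : CombMap D) (r : D) (special : Set D)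
    (dir : D → Bool) (col : D → Fin 3) (P : D → Prop) (excl2 : Bool) (s : D) :
    List (Bool × Fin 3) :=
  (if s ∈ special ∧ ¬ (excl2 = true ∧ (!(dir (M.opp s)), col (M.opp s)) =
      ((true : Bool), (2 : Fin 3)))
    then [((!(dir (M.opp s))), col (M.opp s))] else []) ++
  ((sectorDarts M P s).filter fun g => decide (InnerDart M r g)).map
      (fun g => (dir g, col g)) ++
  (if nextDelim M P s ∈ special ∧ ¬ (excl2 = true ∧
      (dir (nextDelim M P s), col (nextDelim M P s)) = ((true : Bool), (2 : Fin 3)))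
    then [(dir (nextDelim M P s), col (nextDelim M P s))] else [])

/-- delimiters around an inner vertex: the special darts and the outgoing dart of
color 2 -/
def innerDelim (special : Set D) (dir : D → Bool) (col : D → Fin 3) (g : D) : Prop :=
  g ∈ special ∨ (dir g = true ∧ col g = 2)

/-- delimiters around the root vertex `v_i`: the special darts and the root-face
corner (at the root dart `vDart M r i`) -/
def rootDelim (M : CombMap D) (r : D) (special : Set D) (i : ℕ) (g : D) : Prop :=
  g ∈ special ∨ g = vDart M r i

/-- local condition at an inner vertex `v`: exactly one outgoing edge (occurrence)
of color 2, and every sector (maximal interval avoiding the special faces and this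
edge) reads `Seq(In 1), Out 0, Seq(In 2), Out 1, Seq(In 0)` in ccw order -/
def LocalVertexCond (M : CombMap D) (r : D) (special : Set D)
    (dir : D → Bool) (col : D → Fin 3) (v : D) : Prop :=
  (∃! gc : D × Bool, M.sameVertex v gc.1 ∧
      cond gc.2 (gc.1 ∈ special ∧ dir (M.opp gc.1) = false ∧ col (M.opp gc.1) = 2)
        (dir gc.1 = true ∧ col gc.1 = 2)) ∧
  ∀ s, M.sameVertex v s → innerDelim special dir col s →
    SchnyderPattern (sectorVals M r special dir col (innerDelim special dir col) true s)

/-- root-face condition at `v_i` (`i = 0` or `1`): all inner edges of the root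
sector are ingoing of color `i`, and every other sector reads
`Seq(In 1), Out 0, Seq(In 2), Out 1, Seq(In 0)` in ccw order -/
def RootVertexCond (M : CombMap D) (r : D) (special : Set D)
    (dir : D → Bool) (col : D → Fin 3) (i : Fin 3) : Prop :=
  (∀ p ∈ sectorVals M r special dir col (rootDelim M r special (i : ℕ)) false
      (vDart M r (i : ℕ)), p = ((false : Bool), i)) ∧
  (∀ s, M.sameVertex (vDart M r (i : ℕ)) s → s ∈ special →
      SchnyderPattern (sectorVals M r special dir col
        (rootDelim M r special (i : ℕ)) false s))

/-- a cut-graph: a spanning cellular subgraph with a unique face, i.e. a connected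
spanning subgraph whose complement on the surface is a single open disk -/
def IsCutGraph (M : CombMap D) (gT : ℕ) (E2 : Set D) : Prop :=
  (∀ h ∈ E2, M.opp h ∈ E2) ∧
  (∀ v : D, ∃ h ∈ E2, M.sameVertex v h) ∧
  (∀ a ∈ E2, ∀ b ∈ E2, Relation.ReflTransGen
      (fun x y => x ∈ E2 ∧ y ∈ E2 ∧ (M.sameVertex x y ∨ y = M.opp x)) a b) ∧
  graphFaces M E2 = 1 ∧
  ((M.numVertices : ℤ) - (numOrbitsIn (⇑M.opp) E2 : ℤ)) + 1 = 2 - 2 * (gT : ℤ)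

/-- the darts of the cut-graph `G₂`: the (non-special) edges of color 2, the two
root edges `{v₀,v₂}` and `{v₁,v₂}`, and the special edges (not doubled) -/
def G2darts (M : CombMap D) (r : D) (special : Set D) (col : D → Fin 3) : Set D :=
  {h | InnerDart M r h ∧ h ∉ special ∧ col h = 2} ∪ special ∪
  {h | RootEdgeDart M r h ∧ (M.sameVertex (vDart M r 2) h ∨
      M.sameVertex (vDart M r 2) (M.opp h))}

/-- the edges of color 2 form a tree spanning all vertices except `v₀` and `v₁`,
rooted at `v₂` with all edges directed toward `v₂` -/
def Tree2Cond (M : CombMap D) (r : D) (special : Set D)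
    (dir : D → Bool) (col : D → Fin 3) : Prop :=
  (∀ h, InnerDart M r h → h ∉ special → col h = 2 →
      ¬ M.sameVertex (vDart M r 0) h ∧ ¬ M.sameVertex (vDart M r 1) h) ∧
  (∀ v : D, ¬ M.sameVertex (vDart M r 0) v → ¬ M.sameVertex (vDart M r 1) v →
      ¬ M.sameVertex (vDart M r 2) v →
      ∃! h, M.sameVertex v h ∧ InnerDart M r h ∧ h ∉ special ∧ col h = 2 ∧
        dir h = true) ∧
  (∀ h, M.sameVertex (vDart M r 2) h →
      ¬ (InnerDart M r h ∧ h ∉ special ∧ col h = 2 ∧ dir h = true)) ∧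
  (∀ v : D, ¬ M.sameVertex (vDart M r 0) v → ¬ M.sameVertex (vDart M r 1) v →
      Relation.ReflTransGen (fun a b => ∃ h, M.sameVertex a h ∧ InnerDart M r h ∧
          h ∉ special ∧ col h = 2 ∧ dir h = true ∧ M.sameVertex b (M.opp h))
        v (vDart M r 2))

/-- a `g`-Schnyder wood of a genus-`gT` triangulation with root face at `r`:
the inner edges are partitioned into normal edges and special edges (set of
darts `special`, each special edge carrying two independently directed and
colored copies, recorded on its two darts), every edge is directed and colored
in `{0,1,2}`, subject to the root-face condition, the local condition for inner
vertices and the cut-graph condition -/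
structure IsGSchnyderWood (M : CombMap D) (r : D) (gT : ℕ)
    (special : Set D) (dir : D → Bool) (col : D → Fin 3) : Prop where
  special_opp : ∀ h ∈ special, M.opp h ∈ special
  special_inner : ∀ h ∈ special, InnerDart M r h
  consistent : ∀ h, InnerDart M r h → h ∉ special →
      dir (M.opp h) = !dir h ∧ col (M.opp h) = col h
  v2_nospecial : ∀ g, M.sameVertex (vDart M r 2) g → g ∉ special
  v2_in2 : ∀ g, M.sameVertex (vDart M r 2) g → InnerDart M r g →
      dir g = false ∧ col g = 2
  root0 : RootVertexCond M r special dir col 0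
  root1 : RootVertexCond M r special dir col 1
  local_inner : ∀ v, InnerVertex M r v → LocalVertexCond M r special dir col v
  tree2 : Tree2Cond M r special dir col
  cut : IsCutGraph M gT (G2darts M r special col)

/-- a Schnyder wood of a plane triangulation (Definition of Schnyder): an
orientation and coloring of the inner edges such that all inner edges incident
to `v_i` are ingoing of color `i`, and around each inner vertex the edges read,
in ccw order: `Out 2, Seq(In 1), Out 0, Seq(In 2), Out 1, Seq(In 0)` -/
structure IsPlanarSchnyderWood (M : CombMap D) (r : D)
    (dir : D → Bool) (col : D → Fin 3) : Prop where
  consistent : ∀ h, InnerDart M r h → dir (M.opp h) = !dir h ∧ col (M.opp h) = col h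
  root_cond : ∀ i : Fin 3, ∀ g, M.sameVertex (vDart M r (i : ℕ)) g →
      InnerDart M r g → dir g = false ∧ col g = i
  local_cond : ∀ v, InnerVertex M r v → LocalVertexCond M r ∅ dir col v

end CombMap

/-!
Adding the chord `e` to `C` only changes the boundary walk `W` through the two corners `d`, `d'`
of `e`: the new walk leaves `d` along `e`, continues on the part of `W` after `d'`, and comes
back to `d'` along the other side of `e`. Since `d` and `d'` lie on the same walk `W`, it is cut
into two walks, so the number of boundary faces grows by one, while one edge and no vertex or
face is added to `C`. The complementary dual only loses the dual edge `e*`, which is not a bridge.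
-/

namespace CombMap

variable {D : Type} [Fintype D] [DecidableEq D]

section Orbits

variable {f f' : D → D} {S : Set D} {x y : D}

lemma mem_forb_self (f : D → D) (x : D) : x ∈ forb f x := ⟨0, rfl⟩

lemma apply_mem_forb_self (f : D → D) (x : D) : f x ∈ forb f x := ⟨1, rfl⟩

lemma apply_mem_forb (h : y ∈ forb f x) : f y ∈ forb f x := by
  obtain ⟨n, rfl⟩ := h
  exact ⟨n + 1, Function.iterate_succ_apply' f n x⟩

lemma forb_subset_of_mapsTo (hf : Set.MapsTo f S S) (hx : x ∈ S) : forb f x ⊆ S := by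
  rintro _ ⟨n, rfl⟩
  exact hf.iterate n hx

lemma forb_subset_forb (h : y ∈ forb f x) : forb f y ⊆ forb f x :=
  forb_subset_of_mapsTo (fun _ => apply_mem_forb) h

lemma exists_isPeriodicPt (hf : Set.MapsTo f S S) (hfi : Set.InjOn f S) (hx : x ∈ S) :
    ∃ n, 0 < n ∧ Function.IsPeriodicPt f n x := by
  obtain ⟨n, hn, hper⟩ :=
    Function.mem_periodicPts.1 ((hf.restrict_inj.2 hfi).mem_periodicPts ⟨x, hx⟩)
  refine ⟨n, hn, ?_⟩
  have := congrArg Subtype.val hper.eq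
  rwa [hf.iterate_restrict] at this

lemma mem_forb_comm (hf : Set.MapsTo f S S) (hfi : Set.InjOn f S) (hx : x ∈ S)
    (h : y ∈ forb f x) : x ∈ forb f y := by
  obtain ⟨n, rfl⟩ := h
  obtain ⟨m, hm, hper⟩ := exists_isPeriodicPt hf hfi hx
  refine ⟨m * n - n, ?_⟩
  rw [← Function.iterate_add_apply, Nat.sub_add_cancel (Nat.le_mul_of_pos_left n hm)]
  exact (hper.mul_const n).eq

lemma forb_eq_of_mem (hf : Set.MapsTo f S S) (hfi : Set.InjOn f S) (hx : x ∈ S)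
    (h : y ∈ forb f x) : forb f y = forb f x :=
  (forb_subset_forb h).antisymm (forb_subset_forb (mem_forb_comm hf hfi hx h))

lemma forb_eq_of_eqOn (h : ∀ y ∈ forb f x, f' y = f y) : forb f' x = forb f x := by
  have hiter : ∀ n, f'^[n] x = f^[n] x := by
    intro n
    induction n with
    | zero => rfl
    | succ n ih =>
      rw [Function.iterate_succ_apply', Function.iterate_succ_apply', ih, h _ ⟨n, rfl⟩]
  ext y
  simp only [forb, Set.mem_ofPred_eq, hiter]

lemma image_forb_eq_insert (hf : Set.MapsTo f S S) (hfi : Set.InjOn f S) (hx : x ∈ S) :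
    (fun y => forb f y) '' S = insert (forb f x) ((fun y => forb f y) '' (S \ forb f x)) := by
  ext T
  constructor
  · rintro ⟨y, hy, rfl⟩
    by_cases hyx : y ∈ forb f x
    · exact Or.inl (forb_eq_of_mem hf hfi hx hyx)
    · exact Or.inr ⟨y, ⟨hy, hyx⟩, rfl⟩
  · rintro (rfl | ⟨y, hy, rfl⟩)
    exacts [⟨x, hx, rfl⟩, ⟨y, hy.1, rfl⟩]

end Orbits

section Split

variable {f f' : D → D} {S : Set D} {d d' p q : D}

/-- How a boundary walk `f` changes when a chord with darts `p`, `q` is attached at the corners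
`d`, `d'`. -/
structure IsSplit (f f' : D → D) (S : Set D) (d d' p q : D) : Prop where
  apply_d : f' d = q
  apply_q : f' q = f d'
  apply_d' : f' d' = p
  apply_p : f' p = f d
  apply_of_ne : ∀ x ∈ S, x ≠ d → x ≠ d' → f' x = f x

namespace IsSplit

lemma forb_subset_union (h : IsSplit f f' S d d' p q) (hf : Set.MapsTo f S S) (hd : d ∈ S) :
    forb f d ⊆ forb f' d ∪ forb f' d' := by
  refine (forb_subset_of_mapsTo (S := (forb f' d ∪ forb f' d') ∩ S) ?_
    ⟨Or.inl (mem_forb_self f' d), hd⟩).trans Set.inter_subset_left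
  rintro x ⟨hxAB, hxS⟩
  refine ⟨?_, hf hxS⟩
  by_cases hxd : x = d
  · rw [hxd, ← h.apply_p]
    exact Or.inr (apply_mem_forb (h.apply_d' ▸ apply_mem_forb_self f' d'))
  by_cases hxd' : x = d'
  · rw [hxd', ← h.apply_q]
    exact Or.inl (apply_mem_forb (h.apply_d ▸ apply_mem_forb_self f' d))
  rw [← h.apply_of_ne x hxS hxd hxd']
  exact hxAB.imp apply_mem_forb apply_mem_forb

/-- The new walk through `d'` is `d', p, f d, f² d, …, fᵗ d = d'`, which misses `d`. -/
lemma notMem_forb (h : IsSplit f f' S d d' p q) (hf : Set.MapsTo f S S) (hd : d ∈ S)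
    (hp : p ∉ S) (hdd' : d ≠ d') (hsame : d' ∈ forb f d) : d ∉ forb f' d' := by
  have hex : ∃ t, 0 < t ∧ f^[t] d = d' := by
    obtain ⟨t, ht⟩ := hsame
    exact ⟨t, Nat.pos_of_ne_zero (by rintro rfl; exact hdd' ht), ht⟩
  obtain ⟨t, ⟨ht0, htd'⟩, hmin⟩ : ∃ t, (0 < t ∧ f^[t] d = d') ∧
      ∀ k < t, ¬ (0 < k ∧ f^[k] d = d') :=
    ⟨Nat.find hex, Nat.find_spec hex, fun k hk => Nat.find_min hex hk⟩
  have hne_d : ∀ k, 0 < k → k < t → f^[k] d ≠ d := by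
    intro k hk hkt hkd
    have hsplit := Function.iterate_add_apply f (t - k) k d
    rw [Nat.sub_add_cancel hkt.le, hkd, htd'] at hsplit
    exact hmin (t - k) (by omega) ⟨by omega, hsplit.symm⟩
  have hT : Set.MapsTo f' (insert p {y | ∃ k, 0 < k ∧ k ≤ t ∧ f^[k] d = y})
      (insert p {y | ∃ k, 0 < k ∧ k ≤ t ∧ f^[k] d = y}) := by
    rintro y (rfl | ⟨k, hk0, hkt, rfl⟩)
    · exact Or.inr ⟨1, one_pos, ht0, h.apply_p.symm⟩
    rcases hkt.lt_or_eq with hkt | rfl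
    · refine Or.inr ⟨k + 1, by omega, hkt, ?_⟩
      rw [h.apply_of_ne _ (hf.iterate k hd) (hne_d k hk0 hkt) (fun e => hmin k hkt ⟨hk0, e⟩),
        Function.iterate_succ_apply']
    · exact Or.inl (by rw [htd', h.apply_d'])
  intro hdB
  rcases forb_subset_of_mapsTo hT (Or.inr ⟨t, ht0, le_rfl, htd'⟩) hdB with
    hdp | ⟨k, hk0, hkt, hkd⟩
  · exact hp (hdp ▸ hd)
  rcases hkt.lt_or_eq with hkt | rfl
  · exact hne_d k hk0 hkt hkd
  · exact hdd' (hkd.symm.trans htd')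

lemma forb_eq_of_notMem (h : IsSplit f f' S d d' p q) (hf : Set.MapsTo f S S)
    (hfi : Set.InjOn f S) (hsame : d' ∈ forb f d) {x : D} (hx : x ∈ S) (hxd : x ∉ forb f d) :
    forb f' x = forb f x := by
  refine forb_eq_of_eqOn fun y hy => h.apply_of_ne y (forb_subset_of_mapsTo hf hx hy) ?_ ?_
  · rintro rfl
    exact hxd (mem_forb_comm hf hfi hx hy)
  · rintro rfl
    exact hxd (forb_subset_forb hsame (mem_forb_comm hf hfi hx hy))

theorem numOrbitsIn_eq (h : IsSplit f f' S d d' p q) (hf : Set.MapsTo f S S)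
    (hfi : Set.InjOn f S)
    (hf' : Set.MapsTo f' (insert p (insert q S)) (insert p (insert q S)))
    (hf'i : Set.InjOn f' (insert p (insert q S)))
    (hd : d ∈ S) (hd' : d' ∈ S) (hdd' : d ≠ d') (hp : p ∉ S) (hq : q ∉ S)
    (hsame : d' ∈ forb f d) :
    numOrbitsIn f' (insert p (insert q S)) = numOrbitsIn f S + 1 := by
  set W := (fun x => forb f x) '' (S \ forb f d)
  have hqA : q ∈ forb f' d := h.apply_d ▸ apply_mem_forb_self f' d
  have hpB : p ∈ forb f' d' := h.apply_d' ▸ apply_mem_forb_self f' d'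
  have hdS' : d ∈ insert p (insert q S) := Or.inr (Or.inr hd)
  have hd'S' : d' ∈ insert p (insert q S) := Or.inr (Or.inr hd')
  have hAB : forb f' d ≠ forb f' d' :=
    fun hAB => h.notMem_forb hf hd hp hdd' hsame (hAB ▸ mem_forb_self f' d)
  have hW : ∀ T ∈ W, T ⊆ S := by
    rintro _ ⟨x, hx, rfl⟩
    exact forb_subset_of_mapsTo hf hx.1
  have himg : (fun x => forb f' x) '' insert p (insert q S) =
      insert (forb f' d) (insert (forb f' d') W) := by
    ext T
    constructor
    · rintro ⟨x, hx, rfl⟩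
      by_cases hxA : x ∈ forb f' d
      · exact Or.inl (forb_eq_of_mem hf' hf'i hdS' hxA)
      by_cases hxB : x ∈ forb f' d'
      · exact Or.inr (Or.inl (forb_eq_of_mem hf' hf'i hd'S' hxB))
      have hxS : x ∈ S := by
        rcases hx with rfl | rfl | hx
        exacts [absurd hpB hxB, absurd hqA hxA, hx]
      have hxO : x ∉ forb f d := fun hxO => (h.forb_subset_union hf hd hxO).elim hxA hxB
      exact Or.inr (Or.inr ⟨x, ⟨hxS, hxO⟩, (h.forb_eq_of_notMem hf hfi hsame hxS hxO).symm⟩)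
    · rintro (rfl | rfl | ⟨x, ⟨hxS, hxO⟩, rfl⟩)
      exacts [⟨d, hdS', rfl⟩, ⟨d', hd'S', rfl⟩,
        ⟨x, Or.inr (Or.inr hxS), h.forb_eq_of_notMem hf hfi hsame hxS hxO⟩]
  have hAW : forb f' d ∉ insert (forb f' d') W := by
    rintro (hA | hA)
    exacts [hAB hA, hq (hW _ hA hqA)]
  have hBW : forb f' d' ∉ W := fun hB => hp (hW _ hB hpB)
  have hOW : forb f d ∉ W := by
    rintro ⟨x, hx, hxO⟩
    exact hx.2 (hxO ▸ mem_forb_self f x)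
  rw [numOrbitsIn, numOrbitsIn, himg, image_forb_eq_insert hf hfi hd,
    Set.ncard_insert_of_notMem hAW, Set.ncard_insert_of_notMem hBW,
    Set.ncard_insert_of_notMem hOW]

end IsSplit

end Split

section FirstReturn

variable {f : Equiv.Perm D} {s : Set D} {x y : D}

lemma returnSteps_mem (hx : x ∈ s) : returnSteps f s x ∈ {k | 0 < k ∧ (⇑f)^[k] x ∈ s} :=
  Nat.sInf_mem ⟨orderOf f, orderOf_pos f, by rwa [← Equiv.Perm.coe_pow, pow_orderOf_eq_one]⟩

lemma returnSteps_pos (hx : x ∈ s) : 0 < returnSteps f s x := (returnSteps_mem hx).1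

lemma firstReturn_mem (hx : x ∈ s) : firstReturn f s x ∈ s := (returnSteps_mem hx).2

lemma iterate_notMem_of_lt_returnSteps {k : ℕ} (hk : 0 < k) (hlt : k < returnSteps f s x) :
    (⇑f)^[k] x ∉ s :=
  fun h => Nat.notMem_of_lt_sInf hlt ⟨hk, h⟩

lemma returnSteps_eq {j : ℕ} (hj : 0 < j) (hjs : (⇑f)^[j] x ∈ s)
    (hmin : ∀ k, 0 < k → k < j → (⇑f)^[k] x ∉ s) : returnSteps f s x = j := by
  have hmem : returnSteps f s x ∈ {k | 0 < k ∧ (⇑f)^[k] x ∈ s} :=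
    Nat.sInf_mem ⟨j, hj, hjs⟩
  exact le_antisymm (Nat.sInf_le ⟨hj, hjs⟩) (not_lt.1 fun hlt => hmin _ hmem.1 hlt hmem.2)

lemma iterate_inj_of_lt_returnSteps (hx : x ∈ s) {i j : ℕ} (hi : i < returnSteps f s x)
    (hj : j < returnSteps f s x) (h : (⇑f)^[i] x = (⇑f)^[j] x) : i = j := by
  wlog hij : i ≤ j generalizing i j
  · exact (this hj hi h.symm (by omega)).symm
  have hx' : x = (⇑f)^[j - i] x := f.injective.iterate i (by
    rw [h, ← Function.iterate_add_apply, Nat.add_sub_cancel' hij])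
  by_contra hne
  exact iterate_notMem_of_lt_returnSteps (by omega) (by omega) (hx' ▸ hx)

lemma eq_of_iterate_eq_of_le_returnSteps (hx : x ∈ s) (hy : y ∈ s) {i j : ℕ} (hi : 0 < i)
    (hix : i ≤ returnSteps f s x) (hj : 0 < j) (hjy : j ≤ returnSteps f s y)
    (h : (⇑f)^[i] x = (⇑f)^[j] y) : x = y := by
  wlog hij : i ≤ j generalizing x y i j
  · exact (this hy hx hj hjy hi hix h.symm (by omega)).symm
  have hxy : x = (⇑f)^[j - i] y := f.injective.iterate i (by
    rw [h, ← Function.iterate_add_apply, Nat.add_sub_cancel' hij])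
  rcases (j - i).eq_zero_or_pos with h0 | h0
  · simpa [h0] using hxy
  · exact absurd (hxy ▸ hx) (iterate_notMem_of_lt_returnSteps h0 (by omega))

lemma firstReturn_injOn : Set.InjOn (firstReturn f s) s := fun _ hx _ hy h =>
  eq_of_iterate_eq_of_le_returnSteps hx hy (returnSteps_pos hx) le_rfl (returnSteps_pos hy)
    le_rfl h

end FirstReturn

lemma NoLoops.opp_notMem_forb {M : CombMap D} (hL : M.NoLoops) {z u : D}
    (hu : u ∈ forb M.next z) : M.opp u ∉ forb M.next z := by
  intro hou
  apply hL u
  rwa [sameVertex, forb_eq_of_mem (Set.mapsTo_univ _ _) M.next.injective.injOn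
    (Set.mem_univ z) hu]

lemma forb_opp (M : CombMap D) (x : D) : forb M.opp x = {x, M.opp x} := by
  refine (forb_subset_of_mapsTo ?_ (Set.mem_insert x _)).antisymm
    (Set.insert_subset (mem_forb_self _ x) (Set.singleton_subset_iff.2 (apply_mem_forb_self _ x)))
  rintro y (rfl | rfl)
  exacts [Or.inr rfl, Or.inl (M.opp_invol x)]

lemma numOrbitsIn_opp_union_pair (M : CombMap D) {E : Set D} (hE : ∀ d ∈ E, M.opp d ∈ E)
    {e : D} (he : e ∉ E) :
    numOrbitsIn M.opp (E ∪ {e, M.opp e}) = numOrbitsIn M.opp E + 1 := by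
  have hpair : (fun x => forb M.opp x) '' {e, M.opp e} = {{e, M.opp e}} := by
    rw [Set.image_pair, forb_opp, forb_opp, M.opp_invol, Set.pair_comm (M.opp e),
      Set.pair_eq_singleton]
  have hnew : {e, M.opp e} ∉ (fun x => forb M.opp x) '' E := by
    rintro ⟨y, hy, hye⟩
    simp only [forb_opp] at hye
    rcases (hye ▸ Set.mem_insert e _ : e ∈ ({y, M.opp y} : Set D)) with rfl | rfl
    exacts [he hy, he (hE y hy)]
  rw [numOrbitsIn, numOrbitsIn, Set.image_union, hpair, Set.union_singleton,
    Set.ncard_insert_of_notMem hnew]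

namespace Subcomplex

variable {M : CombMap D} {C C' : Subcomplex M}

lemma mapsTo_bwalk (C : Subcomplex M) : Set.MapsTo C.bwalk (C.Es \ C.Fs) (C.Es \ C.Fs) := by
  rintro x ⟨hxE, hxF⟩
  refine ⟨C.es_closed _ (firstReturn_mem hxE), fun hF => ?_⟩
  -- a face of `C` through the boundary brin `bwalk x` would pass through the corner before it
  set r := returnSteps M.next C.Es x
  have hr : 0 < r := returnSteps_pos hxE
  have hprev : M.facePerm.symm (C.bwalk x) = (⇑M.next)^[r - 1] x := by
    rw [Equiv.symm_apply_eq, facePerm, Equiv.trans_apply, ← Function.iterate_succ_apply' M.next,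
      Nat.succ_eq_add_one, Nat.sub_add_cancel hr]
    rfl
  have hFs := perm_inv_mem M.facePerm C.Fs C.fs_closed _ hF
  rw [hprev] at hFs
  rcases (r - 1).eq_zero_or_pos with h0 | h0
  · exact hxF (by simpa [h0] using hFs)
  · exact iterate_notMem_of_lt_returnSteps h0 (by omega) (C.face_edges _ hFs)

lemma injOn_bwalk (C : Subcomplex M) : Set.InjOn C.bwalk C.Es := fun _ hx _ hy h =>
  firstReturn_injOn hx hy (M.opp.injective h)

lemma bwalk_of_mem_cornerExterior (hL : M.NoLoops) {d u : D}
    (hE : C'.Es = C.Es ∪ {u, M.opp u}) (hd : d ∈ C.Es) (hu : u ∈ C.cornerExterior d) :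
    C'.bwalk d = M.opp u ∧ C'.bwalk u = C.bwalk d := by
  obtain ⟨j, hj0, hjr, rfl⟩ := hu
  set r := returnSteps M.next C.Es d
  have hout : ∀ k, 0 < k → k < r → k ≠ j → (⇑M.next)^[k] d ∉ C'.Es := by
    intro k hk hkr hkj hmem
    rw [hE] at hmem
    rcases hmem with hmem | hmem | hmem
    · exact iterate_notMem_of_lt_returnSteps hk hkr hmem
    · exact hkj (iterate_inj_of_lt_returnSteps hd hkr hjr hmem)
    · exact hL.opp_notMem_forb ⟨j, rfl⟩ ⟨k, hmem⟩
  have hin : (⇑M.next)^[j] d ∈ C'.Es := hE ▸ Or.inr (Set.mem_insert _ _)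
  have hrd : returnSteps M.next C'.Es d = j :=
    returnSteps_eq hj0 hin fun k hk hkj => hout k hk (by omega) (by omega)
  have hru : returnSteps M.next C'.Es ((⇑M.next)^[j] d) = r - j := by
    refine returnSteps_eq (by omega) ?_ fun k hk hkj hmem => ?_
    · rw [← Function.iterate_add_apply, Nat.sub_add_cancel hjr.le, hE]
      exact Or.inl (firstReturn_mem hd)
    · rw [← Function.iterate_add_apply] at hmem
      exact hout (k + j) (by omega) (by omega) (by omega) hmem
  refine ⟨congrArg M.opp (congrArg (fun n => (⇑M.next)^[n] d) hrd), congrArg M.opp ?_⟩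
  change (⇑M.next)^[returnSteps M.next C'.Es _] _ = (⇑M.next)^[r] d
  rw [hru, ← Function.iterate_add_apply, Nat.sub_add_cancel hjr.le]

lemma bwalk_of_ne {d d' u x : D} (hE : C'.Es = C.Es ∪ {u, M.opp u})
    (hd : d ∈ C.Es) (hu : u ∈ C.cornerExterior d)
    (hd' : d' ∈ C.Es) (hu' : M.opp u ∈ C.cornerExterior d')
    (hx : x ∈ C.Es) (hxd : x ≠ d) (hxd' : x ≠ d') : C'.bwalk x = C.bwalk x := by
  obtain ⟨j, hj0, hjr, rfl⟩ := hu
  obtain ⟨j', hj0', hjr', hju'⟩ := hu'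
  have hr : returnSteps M.next C'.Es x = returnSteps M.next C.Es x := by
    refine returnSteps_eq (returnSteps_pos hx) (hE ▸ Or.inl (firstReturn_mem hx))
      fun k hk hkr hmem => ?_
    rw [hE] at hmem
    rcases hmem with hmem | hmem | hmem
    · exact iterate_notMem_of_lt_returnSteps hk hkr hmem
    · exact hxd (eq_of_iterate_eq_of_le_returnSteps hx hd hk hkr.le hj0 hjr.le hmem)
    · exact hxd' (eq_of_iterate_eq_of_le_returnSteps hx hd' hk hkr.le hj0' hjr'.le
        (hmem.trans hju'))
  change M.opp ((⇑M.next)^[_] x) = M.opp ((⇑M.next)^[_] x)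
  rw [hr]

lemma compDual_conn_of_addEdge {e : D} (hadd : IsAddEdge C e C') (he : e ∉ C.Es)
    (hbridge : ¬ C.compDual.Bridge e) : C'.compDual.Conn := by
  obtain ⟨hF, hE, -⟩ := hadd
  have hreach : ∀ a ∈ C.compDual.Vs, ∀ b ∈ C.compDual.Vs,
      C.compDual.reachAvoiding {e, M.opp e} a b := by
    by_contra hcon
    exact hbridge ⟨he, hcon⟩
  have hVs : C'.compDual.Vs = C.compDual.Vs := congrArg compl hF
  intro a ha b hb
  rw [hVs] at ha hb
  refine Relation.ReflTransGen.mono ?_ a b (hreach a ha b hb)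
  rintro x y (⟨hx, hy, hxy⟩ | ⟨hxE, hxe, -, rfl⟩)
  · exact Or.inl ⟨hVs ▸ hx, hVs ▸ hy, hxy⟩
  · refine Or.inr ⟨?_, Set.notMem_empty x, Set.notMem_empty _, rfl⟩
    change x ∉ C'.Es
    rw [hE]
    exact fun h => h.elim hxE hxe

lemma eulerChar_of_addEdge {e : D} (hadd : IsAddEdge C e C') (he : e ∉ C.Es) :
    C'.eulerChar = C.eulerChar - 1 := by
  obtain ⟨hF, hE, hV⟩ := hadd
  rw [eulerChar, eulerChar, hF, hE, hV, numOrbitsIn_opp_union_pair M C.es_closed he]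
  push_cast
  ring

lemma isSplit_bwalk_of_splitEdge (hL : M.NoLoops) {e d d' : D} (hadd : IsAddEdge C e C')
    (hd : d ∈ C.Es) (he : e ∈ C.cornerExterior d)
    (hd' : d' ∈ C.Es) (he' : M.opp e ∈ C.cornerExterior d') :
    IsSplit C.bwalk C'.bwalk (C.Es \ C.Fs) d d' e (M.opp e) := by
  have hE := hadd.2.1
  have hE' : C'.Es = C.Es ∪ {M.opp e, M.opp (M.opp e)} := by
    rw [hE, M.opp_invol, Set.pair_comm]
  obtain ⟨hd_e, he_d⟩ := bwalk_of_mem_cornerExterior hL hE hd he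
  obtain ⟨hd'_e, he_d'⟩ := bwalk_of_mem_cornerExterior hL hE' hd' he'
  exact ⟨hd_e, he_d', hd'_e.trans (M.opp_invol e), he_d,
    fun x hx => bwalk_of_ne hE hd he hd' he' hx.1⟩

lemma numBoundaryFaces_of_splitEdge (hL : M.NoLoops) {e : D} (he : C.SplitEdge e)
    (hadd : IsAddEdge C e C') : C'.numBoundaryFaces = C.numBoundaryFaces + 1 := by
  obtain ⟨⟨heE, hoeE, ⟨d, hd, hde⟩, ⟨d', hd', hd'e⟩⟩, -, hsame⟩ := he
  have hS' : C'.Es \ C'.Fs = insert e (insert (M.opp e) (C.Es \ C.Fs)) := by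
    rw [hadd.1, hadd.2.1]
    ext y
    simp only [Set.mem_sdiff, Set.mem_union, Set.mem_insert_iff, Set.mem_singleton_iff]
    constructor
    · rintro ⟨(hy | rfl | rfl), hyF⟩
      exacts [Or.inr (Or.inr ⟨hy, hyF⟩), Or.inl rfl, Or.inr (Or.inl rfl)]
    · rintro (rfl | rfl | ⟨hy, hyF⟩)
      exacts [⟨Or.inr (Or.inl rfl), fun h => heE (C.face_edges _ h)⟩,
        ⟨Or.inr (Or.inr rfl), fun h => hoeE (C.face_edges _ h)⟩, ⟨Or.inl hy, hyF⟩]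
  have hdd' : d ≠ d' := by
    rintro rfl
    obtain ⟨j, -, -, rfl⟩ := hde
    obtain ⟨j', -, -, hj'⟩ := hd'e
    exact hL.opp_notMem_forb ⟨j, rfl⟩ ⟨j', hj'.symm⟩
  have hwalk : d' ∈ forb C.bwalk d :=
    (hsame d d' hd hde hd' hd'e).elim id (mem_forb_comm C.mapsTo_bwalk
      (C.injOn_bwalk.mono Set.sdiff_subset) ⟨hd'.1, hd'.2⟩)
  rw [numBoundaryFaces, numBoundaryFaces, hS']
  exact (isSplit_bwalk_of_splitEdge hL hadd hd.1 hde hd'.1 hd'e).numOrbitsIn_eq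
    C.mapsTo_bwalk (C.injOn_bwalk.mono Set.sdiff_subset)
    (hS' ▸ C'.mapsTo_bwalk) (hS' ▸ C'.injOn_bwalk.mono Set.sdiff_subset)
    ⟨hd.1, hd.2⟩ ⟨hd'.1, hd'.2⟩ hdd' (fun h => heE h.1) (fun h => hoeE h.1) hwalk

end Subcomplex

end CombMap

open CombMap in
theorem split_effect_general
    {D : Type} [Fintype D] [DecidableEq D]
    (M : CombMap D) (g : ℕ) (hT : IsTriang M g)
    (C : Subcomplex M)
    (e : D) (he : C.SplitEdge e)
    (C' : Subcomplex M) (hadd : IsAddEdge C e C') :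
    C'.compDual.Conn ∧
    C'.numBoundaryFaces = C.numBoundaryFaces + 1 ∧
    C'.eulerChar = C.eulerChar - 1 ∧
    C'.assocEulerChar = C.assocEulerChar ∧
    (∀ g' : ℤ, C'.assocHasGenus g' ↔ C.assocHasGenus g') := by
  have heE : e ∉ C.Es := he.1.1
  have hfaces := Subcomplex.numBoundaryFaces_of_splitEdge hT.noLoops he hadd
  have heuler := Subcomplex.eulerChar_of_addEdge hadd heE
  have hassoc : C'.assocEulerChar = C.assocEulerChar := by
    rw [Subcomplex.assocEulerChar, Subcomplex.assocEulerChar, hfaces, heuler]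
    push_cast
    ring
  refine ⟨Subcomplex.compDual_conn_of_addEdge hadd heE he.2.1, hfaces, heuler, hassoc,
    fun g' => ?_⟩
  rw [Subcomplex.assocHasGenus, Subcomplex.assocHasGenus, hassoc]

open CombMap in
theorem split_effect
    {D : Type} [Fintype D] [DecidableEq D]
    (M : CombMap D) (g : ℕ) (hT : IsTriang M g)
    (C : Subcomplex M) (hC : C.Conn) (hD : C.compDual.Conn)
    (e : D) (he : C.SplitEdge e)
    (C' : Subcomplex M) (hadd : IsAddEdge C e C') :
    C'.compDual.Conn ∧
    C'.numBoundaryFaces = C.numBoundaryFaces + 1 ∧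
    C'.eulerChar = C.eulerChar - 1 ∧
    C'.assocEulerChar = C.assocEulerChar ∧
    (∀ g' : ℤ, C'.assocHasGenus g' ↔ C.assocHasGenus g') :=
  split_effect_general M g hT C e he C' hadd
end
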